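/- There exists a polyhedral complex Π in ℝ³ whose support satisfies the Minkowski-Weyl condition but is not connected, and such that rec(Π) = {rec(Λ) | Λ ∈ Π} is not a polyhedral complex. Concretely, one may take Π to be all faces of the polyhedra {(x₁,x₂,0) | x₁ ≥ 0, x₂ ≥ 0}, {(x₁,x₂,1) | x₁ ≥ x₂ ≥ 0}, and {(x₁,x₂,1) | x₂ ≥ x₁ ≥ 0}. -/
import Mathlib


open Set Pointwise

variable {E : Type*} [NormedAddCommGroup E] [NormedSpace ℝ E]

/-- A polyhedron: an intersection of finitely many closed halfspaces. -/
def IsPolyhedron (S : Set E) : Prop :=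
  ∃ (m : ℕ) (f : Fin m → E →ₗ[ℝ] ℝ) (b : Fin m → ℝ), S = {x | ∀ i, f i x ≤ b i}

/-- A polytope: the convex hull of a (nonempty) finite set of points. -/
def IsPolytope (S : Set E) : Prop :=
  ∃ F : Finset E, F.Nonempty ∧ S = convexHull ℝ (F : Set E)

/-- A convex polyhedral cone: the set of nonnegative combinations of finitely
many vectors. -/
def IsPolyhedralCone (S : Set E) : Prop :=
  ∃ F : Finset E, S = {x | ∃ c : E → ℝ, (∀ v, 0 ≤ c v) ∧ x = ∑ v ∈ F, c v • v}

/-- The local recession cone of `S` at `p`: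
`{u | p + t • u ∈ S for all t ≥ 0}`. -/
def locRec (S : Set E) (p : E) : Set E := {u | ∀ t : ℝ, 0 ≤ t → p + t • u ∈ S}

/-- The recession cone of a set: the intersection of all local recession
cones. -/
def recSet (S : Set E) : Set E := ⋂ p ∈ S, locRec S p

/-- The recession cone of a polyhedron: `{u | S + u ⊆ S}`. -/
def recPoly (S : Set E) : Set E := {u | ∀ x ∈ S, x + u ∈ S}

/-- `S_x`: the set of points of `S` minimizing the linear functional `x`. -/
def faceSet (S : Set E) (x : E →ₗ[ℝ] ℝ) : Set E := {u ∈ S | ∀ v ∈ S, x u ≤ x v}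

/-- A face of `S`: a nonempty subset of the form `S_x`. -/
def IsFaceOf (F S : Set E) : Prop := F.Nonempty ∧ ∃ x : E →ₗ[ℝ] ℝ, F = faceSet S x

/-- A polyhedral complex: a nonempty finite collection of (nonempty) polyhedra,
closed under taking faces, in which any two members that meet intersect in a
common face. -/
def IsPolyComplex (P : Set (Set E)) : Prop :=
  P.Nonempty ∧ P.Finite ∧ (∀ S ∈ P, IsPolyhedron S ∧ S.Nonempty) ∧
  (∀ S ∈ P, ∀ F : Set E, IsFaceOf F S → F ∈ P) ∧
  ∀ S ∈ P, ∀ T ∈ P, (S ∩ T).Nonempty → IsFaceOf (S ∩ T) S ∧ IsFaceOf (S ∩ T) T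

/-- The support of a collection of sets. -/
def polySupport (P : Set (Set E)) : Set E := ⋃ S ∈ P, S

/-- The Minkowski-Weyl condition: every local recession cone equals the global
recession cone. -/
def MWCondition (S : Set E) : Prop := ∀ p ∈ S, locRec S p = recSet S

/-- A conic polyhedral complex: a polyhedral complex all of whose members are
convex polyhedral cones. -/
def IsConicPolyComplex (P : Set (Set E)) : Prop :=
  IsPolyComplex P ∧ ∀ S ∈ P, IsPolyhedralCone S

/-- Strongly convex: contains no affine line. -/
def StronglyConvexSet (S : Set E) : Prop :=
  ¬ ∃ p d : E, d ≠ 0 ∧ ∀ t : ℝ, p + t • d ∈ S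

/-- A fan: a conic polyhedral complex all of whose members are strongly
convex. -/
def IsFan (P : Set (Set E)) : Prop :=
  IsConicPolyComplex P ∧ ∀ S ∈ P, StronglyConvexSet S

/-- The recession of a complex: the collection of recession cones of its
members. -/
def recComplex (P : Set (Set E)) : Set (Set E) := {C | ∃ Λ ∈ P, C = recPoly Λ}

/-- The cone `c(S)` over a set `S ⊆ E`, inside `E × ℝ`: the closure of
`{t • (u, 1) | u ∈ S, t > 0}`. -/
def coneOver (S : Set E) : Set (E × ℝ) :=
  closure {y | ∃ u ∈ S, ∃ t : ℝ, 0 < t ∧ y = t • (u, (1 : ℝ))}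

/-- The open cone `c°(S)` over `S`: `{t • (u, 1) | u ∈ S, t > 0}`. -/
def openCone (S : Set E) : Set (E × ℝ) :=
  {y | ∃ u ∈ S, ∃ t : ℝ, 0 < t ∧ y = t • (u, (1 : ℝ))}

/-- The cone `c(Π)` of a complex: the cones over its members together with the
recession cones of its members placed at height `0`. -/
def coneComplex (P : Set (Set E)) : Set (Set (E × ℝ)) :=
  {C | ∃ Λ ∈ P, C = coneOver Λ} ∪
  {C | ∃ Λ ∈ P, C = (recPoly Λ) ×ˢ ({0} : Set ℝ)}

/-- `aff` of a conic complex in `E × ℝ`: the nonempty intersections of its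
members with the hyperplane `E × {1}`, regarded as subsets of `E`. -/
def affOf (P : Set (Set (E × ℝ))) : Set (Set E) :=
  {L | L.Nonempty ∧ ∃ σ ∈ P, L = {u | (u, (1 : ℝ)) ∈ σ}}

/-- A polyhedral set: a finite union of polyhedra. -/
def IsPolyhedralSet (S : Set E) : Prop :=
  ∃ (k : ℕ) (f : Fin k → Set E), (∀ i, IsPolyhedron (f i)) ∧ S = ⋃ i, f i

/-- A finite union of polytopes. -/
def IsFiniteUnionOfPolytopes (S : Set E) : Prop :=
  ∃ (k : ℕ) (f : Fin k → Set E), (∀ i, IsPolytope (f i)) ∧ S = ⋃ i, f i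

section General
variable {E : Type*} [NormedAddCommGroup E] [NormedSpace ℝ E]

/-- A ray from `p` in direction `d`. -/
def rayFrom (p d : E) : Set E := {x | ∃ t : ℝ, 0 ≤ t ∧ x = p + t • d}

/-- A two-generator cone with apex `p`. -/
def cone2 (p d₁ d₂ : E) : Set E :=
  {x | ∃ s t : ℝ, 0 ≤ s ∧ 0 ≤ t ∧ x = p + s • d₁ + t • d₂}

lemma mem_rayFrom_self (p d : E) : p ∈ rayFrom p d := ⟨0, le_refl 0, by simp⟩

lemma mem_cone2_self (p d₁ d₂ : E) : p ∈ cone2 p d₁ d₂ :=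
  ⟨0, 0, le_refl 0, le_refl 0, by simp⟩

lemma isFaceOf_self {S : Set E} (hS : S.Nonempty) : IsFaceOf S S := by
  refine ⟨hS, 0, ?_⟩
  ext u; simp [faceSet]

lemma faceSet_singleton (p : E) (x : (E →ₗ[ℝ] ℝ)) : faceSet {p} x = {p} := by
  ext u; simp only [faceSet, Set.mem_setOf_eq, Set.mem_singleton_iff]
  constructor
  · exact fun h => h.1
  · rintro rfl; exact ⟨rfl, by rintro v rfl; exact le_refl _⟩

lemma point_face_classify (p : E) (S : Set E) :
    IsFaceOf S ({p} : Set E) ↔ S = {p} := by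
  constructor
  · rintro ⟨-, x, rfl⟩; exact faceSet_singleton p x
  · rintro rfl; exact isFaceOf_self ⟨p, rfl⟩

lemma ray_face_classify (p d : E) (x₀ : E →ₗ[ℝ] ℝ) (hx₀ : x₀ d = 1) (S : Set E) :
    IsFaceOf S (rayFrom p d) ↔ S = rayFrom p d ∨ S = {p} := by
  constructor
  · rintro ⟨⟨w, hw⟩, x, rfl⟩
    rcases lt_trichotomy (x d) 0 with h | h | h
    · exfalso
      obtain ⟨⟨t, ht, rfl⟩, hmin⟩ := hw
      have h2 := hmin (p + (t + 1) • d) ⟨t + 1, by linarith, rfl⟩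
      simp only [map_add, map_smul, smul_eq_mul] at h2
      nlinarith
    · left
      ext u
      simp only [faceSet, Set.mem_setOf_eq]
      constructor
      · exact fun h => h.1
      · intro hu
        refine ⟨hu, ?_⟩
        rintro v ⟨t, ht, rfl⟩
        obtain ⟨s, hs, rfl⟩ := hu
        simp [map_add, map_smul, smul_eq_mul, h]
    · right
      ext u
      simp only [faceSet, Set.mem_setOf_eq, Set.mem_singleton_iff]
      constructor
      · rintro ⟨⟨t, ht, rfl⟩, hmin⟩
        have h2 := hmin p (mem_rayFrom_self p d)
        simp only [map_add, map_smul, smul_eq_mul] at h2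
        have ht0 : t = 0 := by nlinarith
        simp [ht0]
      · rintro rfl
        refine ⟨mem_rayFrom_self _ _, ?_⟩
        rintro v ⟨t, ht, rfl⟩
        simp only [map_add, map_smul, smul_eq_mul]
        nlinarith
  · rintro (rfl | rfl)
    · exact isFaceOf_self ⟨p, mem_rayFrom_self p d⟩
    · refine ⟨⟨p, rfl⟩, x₀, ?_⟩
      ext u
      simp only [faceSet, Set.mem_setOf_eq, Set.mem_singleton_iff]
      constructor
      · rintro rfl
        refine ⟨mem_rayFrom_self _ _, ?_⟩
        rintro v ⟨t, ht, rfl⟩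
        simp only [map_add, map_smul, smul_eq_mul, hx₀]
        linarith
      · rintro ⟨⟨t, ht, rfl⟩, hmin⟩
        have h2 := hmin p (mem_rayFrom_self p d)
        simp only [map_add, map_smul, smul_eq_mul, hx₀, mul_one] at h2
        have ht0 : t = 0 := le_antisymm (by linarith) ht
        simp [ht0]

end General
section General2
variable {E : Type*} [NormedAddCommGroup E] [NormedSpace ℝ E]

lemma cone2_face_classify (p d₁ d₂ : E) (x₁ x₂ : E →ₗ[ℝ] ℝ)
    (h11 : x₁ d₁ = 0) (h12 : x₁ d₂ = 1) (h21 : x₂ d₁ = 1) (h22 : x₂ d₂ = 0)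
    (S : Set E) :
    IsFaceOf S (cone2 p d₁ d₂) ↔
      S = cone2 p d₁ d₂ ∨ S = rayFrom p d₁ ∨ S = rayFrom p d₂ ∨ S = {p} := by
  constructor
  · rintro ⟨⟨w, hw⟩, x, rfl⟩
    have ha : 0 ≤ x d₁ := by
      by_contra hc
      push_neg at hc
      obtain ⟨⟨s, t, hs, ht, rfl⟩, hmin⟩ := hw
      have h2 := hmin (p + (s + 1) • d₁ + t • d₂) ⟨s + 1, t, by linarith, ht, rfl⟩
      simp only [map_add, map_smul, smul_eq_mul] at h2
      nlinarith
    have hb : 0 ≤ x d₂ := by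
      by_contra hc
      push_neg at hc
      obtain ⟨⟨s, t, hs, ht, rfl⟩, hmin⟩ := hw
      have h2 := hmin (p + s • d₁ + (t + 1) • d₂) ⟨s, t + 1, hs, by linarith, rfl⟩
      simp only [map_add, map_smul, smul_eq_mul] at h2
      nlinarith
    have hpmin : ∀ v ∈ cone2 p d₁ d₂, x p ≤ x v := by
      rintro v ⟨s, t, hs, ht, rfl⟩
      simp only [map_add, map_smul, smul_eq_mul]
      nlinarith
    rcases eq_or_lt_of_le ha with ha0 | ha0 <;> rcases eq_or_lt_of_le hb with hb0 | hb0
    · -- x d₁ = 0, x d₂ = 0 : the whole cone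
      left; ext u
      simp only [faceSet, Set.mem_setOf_eq]
      constructor
      · exact fun h => h.1
      · intro hu
        refine ⟨hu, ?_⟩
        obtain ⟨s, t, hs, ht, rfl⟩ := hu
        intro v hv
        have := hpmin v hv
        simp only [map_add, map_smul, smul_eq_mul, ← ha0, ← hb0] at *
        linarith
    · -- x d₁ = 0, x d₂ > 0 : ray d₁
      right; left; ext u
      simp only [faceSet, Set.mem_setOf_eq, rayFrom]
      constructor
      · rintro ⟨⟨s, t, hs, ht, rfl⟩, hmin⟩
        have h2 := hmin p (mem_cone2_self p d₁ d₂)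
        simp only [map_add, map_smul, smul_eq_mul, ← ha0] at h2
        have ht0 : t = 0 := by nlinarith
        exact ⟨s, hs, by simp [ht0]⟩
      · rintro ⟨s, hs, rfl⟩
        refine ⟨⟨s, 0, hs, le_refl 0, by simp⟩, ?_⟩
        rintro v ⟨s', t', hs', ht', rfl⟩
        simp only [map_add, map_smul, smul_eq_mul, ← ha0]
        nlinarith
    · -- x d₁ > 0, x d₂ = 0 : ray d₂
      right; right; left; ext u
      simp only [faceSet, Set.mem_setOf_eq, rayFrom]
      constructor
      · rintro ⟨⟨s, t, hs, ht, rfl⟩, hmin⟩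
        have h2 := hmin p (mem_cone2_self p d₁ d₂)
        simp only [map_add, map_smul, smul_eq_mul, ← hb0] at h2
        have hs0 : s = 0 := by nlinarith
        exact ⟨t, ht, by simp [hs0]⟩
      · rintro ⟨t, ht, rfl⟩
        refine ⟨⟨0, t, le_refl 0, ht, by simp⟩, ?_⟩
        rintro v ⟨s', t', hs', ht', rfl⟩
        simp only [map_add, map_smul, smul_eq_mul, ← hb0]
        nlinarith
    · -- both positive : apex
      right; right; right; ext u
      simp only [faceSet, Set.mem_setOf_eq, Set.mem_singleton_iff]
      constructor
      · rintro ⟨⟨s, t, hs, ht, rfl⟩, hmin⟩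
        have h2 := hmin p (mem_cone2_self p d₁ d₂)
        simp only [map_add, map_smul, smul_eq_mul] at h2
        have hs0 : s = 0 := by nlinarith
        have ht0 : t = 0 := by nlinarith
        simp [hs0, ht0]
      · rintro rfl
        exact ⟨mem_cone2_self _ _ _, hpmin⟩
  · rintro (rfl | rfl | rfl | rfl)
    · exact isFaceOf_self ⟨p, mem_cone2_self p d₁ d₂⟩
    · refine ⟨⟨p, mem_rayFrom_self _ _⟩, x₁, ?_⟩
      ext u
      simp only [faceSet, Set.mem_setOf_eq, rayFrom]
      constructor
      · rintro ⟨s, hs, rfl⟩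
        refine ⟨⟨s, 0, hs, le_refl 0, by simp⟩, ?_⟩
        rintro v ⟨s', t', hs', ht', rfl⟩
        simp only [map_add, map_smul, smul_eq_mul, h11, h12]
        linarith
      · rintro ⟨⟨s, t, hs, ht, rfl⟩, hmin⟩
        have h2 := hmin p (mem_cone2_self p d₁ d₂)
        simp only [map_add, map_smul, smul_eq_mul, h11, h12] at h2
        have ht0 : t = 0 := by linarith
        exact ⟨s, hs, by simp [ht0]⟩
    · refine ⟨⟨p, mem_rayFrom_self _ _⟩, x₂, ?_⟩
      ext u
      simp only [faceSet, Set.mem_setOf_eq, rayFrom]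
      constructor
      · rintro ⟨t, ht, rfl⟩
        refine ⟨⟨0, t, le_refl 0, ht, by simp⟩, ?_⟩
        rintro v ⟨s', t', hs', ht', rfl⟩
        simp only [map_add, map_smul, smul_eq_mul, h21, h22]
        linarith
      · rintro ⟨⟨s, t, hs, ht, rfl⟩, hmin⟩
        have h2 := hmin p (mem_cone2_self p d₁ d₂)
        simp only [map_add, map_smul, smul_eq_mul, h21, h22] at h2
        have hs0 : s = 0 := by linarith
        exact ⟨t, ht, by simp [hs0]⟩
    · refine ⟨⟨p, rfl⟩, x₁ + x₂, ?_⟩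
      ext u
      simp only [faceSet, Set.mem_setOf_eq, Set.mem_singleton_iff]
      constructor
      · rintro rfl
        refine ⟨mem_cone2_self _ _ _, ?_⟩
        rintro v ⟨s, t, hs, ht, rfl⟩
        simp only [LinearMap.add_apply, map_add, map_smul, smul_eq_mul, h11, h12, h21, h22]
        linarith
      · rintro ⟨⟨s, t, hs, ht, rfl⟩, hmin⟩
        have h2 := hmin p (mem_cone2_self p d₁ d₂)
        simp only [LinearMap.add_apply, map_add, map_smul, smul_eq_mul, h11, h12, h21, h22] at h2
        have hs0 : s = 0 := by linarith
        have ht0 : t = 0 := by linarith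
        simp [hs0, ht0]

end General2
section Concrete

/-- Coordinate projection functionals on `Fin 3 → ℝ`. -/
def pr (i : Fin 3) : (Fin 3 → ℝ) →ₗ[ℝ] ℝ := LinearMap.proj i

@[simp] lemma pr_apply (i : Fin 3) (x : Fin 3 → ℝ) : pr i x = x i := rfl

def e0 : Fin 3 → ℝ := ![1, 0, 0]
def e1 : Fin 3 → ℝ := ![0, 1, 0]
def ed : Fin 3 → ℝ := ![1, 1, 0]
def p1 : Fin 3 → ℝ := ![0, 0, 1]

@[simp] lemma e0_0 : e0 0 = 1 := rfl
@[simp] lemma e0_1 : e0 1 = 0 := rfl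
@[simp] lemma e0_2 : e0 2 = 0 := rfl
@[simp] lemma e1_0 : e1 0 = 0 := rfl
@[simp] lemma e1_1 : e1 1 = 1 := rfl
@[simp] lemma e1_2 : e1 2 = 0 := rfl
@[simp] lemma ed_0 : ed 0 = 1 := rfl
@[simp] lemma ed_1 : ed 1 = 1 := rfl
@[simp] lemma ed_2 : ed 2 = 0 := rfl
@[simp] lemma p1_0 : p1 0 = 0 := rfl
@[simp] lemma p1_1 : p1 1 = 0 := rfl
@[simp] lemma p1_2 : p1 2 = 1 := rfl

def L1 : Set (Fin 3 → ℝ) := {x | 0 ≤ x 0 ∧ 0 ≤ x 1 ∧ x 2 = 0}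
def L2 : Set (Fin 3 → ℝ) := {x | 0 ≤ x 1 ∧ x 1 ≤ x 0 ∧ x 2 = 1}
def L3 : Set (Fin 3 → ℝ) := {x | 0 ≤ x 0 ∧ x 0 ≤ x 1 ∧ x 2 = 1}
def Rx : Set (Fin 3 → ℝ) := {x | 0 ≤ x 0 ∧ x 1 = 0 ∧ x 2 = 0}
def Ry : Set (Fin 3 → ℝ) := {x | x 0 = 0 ∧ 0 ≤ x 1 ∧ x 2 = 0}
def Ra : Set (Fin 3 → ℝ) := {x | 0 ≤ x 0 ∧ x 1 = 0 ∧ x 2 = 1}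
def Rb : Set (Fin 3 → ℝ) := {x | x 0 = 0 ∧ 0 ≤ x 1 ∧ x 2 = 1}
def Rd : Set (Fin 3 → ℝ) := {x | 0 ≤ x 0 ∧ x 0 = x 1 ∧ x 2 = 1}
def V0 : Set (Fin 3 → ℝ) := {0}
def V1 : Set (Fin 3 → ℝ) := {p1}

lemma L1_eq : L1 = cone2 0 e0 e1 := by
  ext x
  simp only [L1, cone2, Set.mem_setOf_eq]
  constructor
  · rintro ⟨h0, h1, h2⟩
    refine ⟨x 0, x 1, h0, h1, ?_⟩
    funext i
    fin_cases i <;> simp [e0, e1, h2]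
  · rintro ⟨s, t, hs, ht, rfl⟩
    refine ⟨by simpa using hs, by simpa using ht, by simp⟩

lemma L2_eq : L2 = cone2 p1 e0 ed := by
  ext x
  simp only [L2, cone2, Set.mem_setOf_eq]
  constructor
  · rintro ⟨h0, h1, h2⟩
    refine ⟨x 0 - x 1, x 1, by linarith, h0, ?_⟩
    funext i
    fin_cases i <;> simp [e0, ed, p1, h2] <;> ring_nf
  · rintro ⟨s, t, hs, ht, rfl⟩
    refine ⟨by simpa using ht, by simp; linarith, by simp⟩

lemma L3_eq : L3 = cone2 p1 e1 ed := by
  ext x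
  simp only [L3, cone2, Set.mem_setOf_eq]
  constructor
  · rintro ⟨h0, h1, h2⟩
    refine ⟨x 1 - x 0, x 0, by linarith, h0, ?_⟩
    funext i
    fin_cases i <;> simp [e1, ed, p1, h2] <;> ring_nf
  · rintro ⟨s, t, hs, ht, rfl⟩
    refine ⟨by simpa using ht, by simp; linarith, by simp⟩

lemma Rx_eq : Rx = rayFrom 0 e0 := by
  ext x
  simp only [Rx, rayFrom, Set.mem_setOf_eq]
  constructor
  · rintro ⟨h0, h1, h2⟩
    refine ⟨x 0, h0, ?_⟩
    funext i; fin_cases i <;> simp [e0, h1, h2]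
  · rintro ⟨t, ht, rfl⟩
    refine ⟨by simpa using ht, by simp, by simp⟩

lemma Ry_eq : Ry = rayFrom 0 e1 := by
  ext x
  simp only [Ry, rayFrom, Set.mem_setOf_eq]
  constructor
  · rintro ⟨h0, h1, h2⟩
    refine ⟨x 1, h1, ?_⟩
    funext i; fin_cases i <;> simp [e1, h0, h2]
  · rintro ⟨t, ht, rfl⟩
    refine ⟨by simp, by simpa using ht, by simp⟩

lemma Ra_eq : Ra = rayFrom p1 e0 := by
  ext x
  simp only [Ra, rayFrom, Set.mem_setOf_eq]
  constructor
  · rintro ⟨h0, h1, h2⟩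
    refine ⟨x 0, h0, ?_⟩
    funext i; fin_cases i <;> simp [e0, h1, h2]
  · rintro ⟨t, ht, rfl⟩
    refine ⟨by simpa using ht, by simp, by simp⟩

lemma Rb_eq : Rb = rayFrom p1 e1 := by
  ext x
  simp only [Rb, rayFrom, Set.mem_setOf_eq]
  constructor
  · rintro ⟨h0, h1, h2⟩
    refine ⟨x 1, h1, ?_⟩
    funext i; fin_cases i <;> simp [e1, h0, h2]
  · rintro ⟨t, ht, rfl⟩
    refine ⟨by simp, by simpa using ht, by simp⟩

lemma Rd_eq : Rd = rayFrom p1 ed := by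
  ext x
  simp only [Rd, rayFrom, Set.mem_setOf_eq]
  constructor
  · rintro ⟨h0, h1, h2⟩
    refine ⟨x 0, h0, ?_⟩
    funext i; fin_cases i <;> simp [ed, h2, ← h1]
  · rintro ⟨t, ht, rfl⟩
    refine ⟨by simpa using ht, by simp, by simp⟩

lemma V0_eq : V0 = ({0} : Set (Fin 3 → ℝ)) := rfl
lemma V1_eq : V1 = ({p1} : Set (Fin 3 → ℝ)) := rfl

lemma faces_L1 (S : Set (Fin 3 → ℝ)) :
    IsFaceOf S L1 ↔ S = L1 ∨ S = Rx ∨ S = Ry ∨ S = V0 := by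
  rw [L1_eq, Rx_eq, Ry_eq, V0_eq]
  exact cone2_face_classify 0 e0 e1 (pr 1) (pr 0) (by simp) (by simp) (by simp) (by simp) S

lemma faces_L2 (S : Set (Fin 3 → ℝ)) :
    IsFaceOf S L2 ↔ S = L2 ∨ S = Ra ∨ S = Rd ∨ S = V1 := by
  rw [L2_eq, Ra_eq, Rd_eq, V1_eq]
  exact cone2_face_classify p1 e0 ed (pr 1) (pr 0 - pr 1) (by simp) (by simp) (by simp) (by simp) S

lemma faces_L3 (S : Set (Fin 3 → ℝ)) :
    IsFaceOf S L3 ↔ S = L3 ∨ S = Rb ∨ S = Rd ∨ S = V1 := by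
  rw [L3_eq, Rb_eq, Rd_eq, V1_eq]
  exact cone2_face_classify p1 e1 ed (pr 0) (pr 1 - pr 0) (by simp) (by simp) (by simp) (by simp) S

lemma faces_Rx (S : Set (Fin 3 → ℝ)) : IsFaceOf S Rx ↔ S = Rx ∨ S = V0 := by
  rw [Rx_eq, V0_eq]; exact ray_face_classify 0 e0 (pr 0) (by simp) S

lemma faces_Ry (S : Set (Fin 3 → ℝ)) : IsFaceOf S Ry ↔ S = Ry ∨ S = V0 := by
  rw [Ry_eq, V0_eq]; exact ray_face_classify 0 e1 (pr 1) (by simp) S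

lemma faces_Ra (S : Set (Fin 3 → ℝ)) : IsFaceOf S Ra ↔ S = Ra ∨ S = V1 := by
  rw [Ra_eq, V1_eq]; exact ray_face_classify p1 e0 (pr 0) (by simp) S

lemma faces_Rb (S : Set (Fin 3 → ℝ)) : IsFaceOf S Rb ↔ S = Rb ∨ S = V1 := by
  rw [Rb_eq, V1_eq]; exact ray_face_classify p1 e1 (pr 1) (by simp) S

lemma faces_Rd (S : Set (Fin 3 → ℝ)) : IsFaceOf S Rd ↔ S = Rd ∨ S = V1 := by
  rw [Rd_eq, V1_eq]; exact ray_face_classify p1 ed (pr 0) (by simp) S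

lemma faces_V0 (S : Set (Fin 3 → ℝ)) : IsFaceOf S V0 ↔ S = V0 :=
  point_face_classify 0 S

lemma faces_V1 (S : Set (Fin 3 → ℝ)) : IsFaceOf S V1 ↔ S = V1 :=
  point_face_classify p1 S

end Concrete
section Poly
variable {E : Type*} [NormedAddCommGroup E] [NormedSpace ℝ E]

lemma isPolyhedron_le (f : E →ₗ[ℝ] ℝ) (b : ℝ) : IsPolyhedron {x | f x ≤ b} :=
  ⟨1, fun _ => f, fun _ => b, by ext x; simp [Fin.forall_fin_one]⟩

lemma isPolyhedron_ge (f : E →ₗ[ℝ] ℝ) (b : ℝ) : IsPolyhedron {x | b ≤ f x} :=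
  ⟨1, fun _ => -f, fun _ => -b, by
    ext x; simp only [Set.mem_setOf_eq, Fin.forall_fin_one, LinearMap.neg_apply]
    constructor <;> intro h <;> linarith⟩

lemma isPolyhedron_eqc (f : E →ₗ[ℝ] ℝ) (b : ℝ) : IsPolyhedron {x | f x = b} :=
  ⟨2, ![f, -f], ![b, -b], by
    ext x
    simp only [Set.mem_setOf_eq, Fin.forall_fin_two, Matrix.cons_val_zero,
      Matrix.cons_val_one, Matrix.head_cons, LinearMap.neg_apply]
    constructor
    · intro h; exact ⟨le_of_eq h, by linarith⟩
    · rintro ⟨h1, h2⟩; linarith⟩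

lemma isPolyhedron_inter {S T : Set E} (hS : IsPolyhedron S) (hT : IsPolyhedron T) :
    IsPolyhedron (S ∩ T) := by
  obtain ⟨m, f, b, rfl⟩ := hS
  obtain ⟨n, g, c, rfl⟩ := hT
  refine ⟨m + n, Fin.append f g, Fin.append b c, ?_⟩
  ext x
  simp only [Set.mem_inter_iff, Set.mem_setOf_eq]
  constructor
  · rintro ⟨h1, h2⟩ i
    induction i using Fin.addCases with
    | left i => simpa [Fin.append_left] using h1 i
    | right i => simpa [Fin.append_right] using h2 i
  · intro h
    constructor
    · intro i; simpa [Fin.append_left] using h (Fin.castAdd n i)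
    · intro i; simpa [Fin.append_right] using h (Fin.natAdd m i)

end Poly

section Concrete2

lemma poly_L1 : IsPolyhedron L1 := by
  have h : L1 = {x : Fin 3 → ℝ | (0:ℝ) ≤ pr 0 x} ∩ ({x | (0:ℝ) ≤ pr 1 x} ∩ {x | pr 2 x = 0}) := by
    ext x; simp [L1]
  rw [h]
  exact isPolyhedron_inter (isPolyhedron_ge _ _)
    (isPolyhedron_inter (isPolyhedron_ge _ _) (isPolyhedron_eqc _ _))

lemma poly_L2 : IsPolyhedron L2 := by
  have h : L2 = {x : Fin 3 → ℝ | (0:ℝ) ≤ pr 1 x} ∩ ({x | (pr 1 - pr 0) x ≤ (0:ℝ)} ∩ {x | pr 2 x = 1}) := by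
    ext x; simp [L2]
  rw [h]
  exact isPolyhedron_inter (isPolyhedron_ge _ _)
    (isPolyhedron_inter (isPolyhedron_le _ _) (isPolyhedron_eqc _ _))

lemma poly_L3 : IsPolyhedron L3 := by
  have h : L3 = {x : Fin 3 → ℝ | (0:ℝ) ≤ pr 0 x} ∩ ({x | (pr 0 - pr 1) x ≤ (0:ℝ)} ∩ {x | pr 2 x = 1}) := by
    ext x; simp [L3]
  rw [h]
  exact isPolyhedron_inter (isPolyhedron_ge _ _)
    (isPolyhedron_inter (isPolyhedron_le _ _) (isPolyhedron_eqc _ _))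

lemma poly_Rx : IsPolyhedron Rx := by
  have h : Rx = {x : Fin 3 → ℝ | (0:ℝ) ≤ pr 0 x} ∩ ({x | pr 1 x = (0:ℝ)} ∩ {x | pr 2 x = 0}) := by
    ext x; simp [Rx]
  rw [h]
  exact isPolyhedron_inter (isPolyhedron_ge _ _)
    (isPolyhedron_inter (isPolyhedron_eqc _ _) (isPolyhedron_eqc _ _))

lemma poly_Ry : IsPolyhedron Ry := by
  have h : Ry = {x : Fin 3 → ℝ | pr 0 x = (0:ℝ)} ∩ ({x | (0:ℝ) ≤ pr 1 x} ∩ {x | pr 2 x = 0}) := by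
    ext x; simp [Ry]
  rw [h]
  exact isPolyhedron_inter (isPolyhedron_eqc _ _)
    (isPolyhedron_inter (isPolyhedron_ge _ _) (isPolyhedron_eqc _ _))

lemma poly_Ra : IsPolyhedron Ra := by
  have h : Ra = {x : Fin 3 → ℝ | (0:ℝ) ≤ pr 0 x} ∩ ({x | pr 1 x = (0:ℝ)} ∩ {x | pr 2 x = 1}) := by
    ext x; simp [Ra]
  rw [h]
  exact isPolyhedron_inter (isPolyhedron_ge _ _)
    (isPolyhedron_inter (isPolyhedron_eqc _ _) (isPolyhedron_eqc _ _))

lemma poly_Rb : IsPolyhedron Rb := by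
  have h : Rb = {x : Fin 3 → ℝ | pr 0 x = (0:ℝ)} ∩ ({x | (0:ℝ) ≤ pr 1 x} ∩ {x | pr 2 x = 1}) := by
    ext x; simp [Rb]
  rw [h]
  exact isPolyhedron_inter (isPolyhedron_eqc _ _)
    (isPolyhedron_inter (isPolyhedron_ge _ _) (isPolyhedron_eqc _ _))

lemma poly_Rd : IsPolyhedron Rd := by
  have h : Rd = {x : Fin 3 → ℝ | (0:ℝ) ≤ pr 0 x} ∩ ({x | (pr 0 - pr 1) x = (0:ℝ)} ∩ {x | pr 2 x = 1}) := by
    ext x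
    simp [Rd, sub_eq_zero]
  rw [h]
  exact isPolyhedron_inter (isPolyhedron_ge _ _)
    (isPolyhedron_inter (isPolyhedron_eqc _ _) (isPolyhedron_eqc _ _))

lemma poly_V0 : IsPolyhedron V0 := by
  have h : V0 = {x : Fin 3 → ℝ | pr 0 x = (0:ℝ)} ∩ ({x | pr 1 x = (0:ℝ)} ∩ {x | pr 2 x = 0}) := by
    ext x
    simp only [V0, Set.mem_singleton_iff, Set.mem_inter_iff, Set.mem_setOf_eq, pr_apply]
    constructor
    · rintro rfl; simp
    · rintro ⟨h1, h2, h3⟩; funext i; fin_cases i <;> simpa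
  rw [h]
  exact isPolyhedron_inter (isPolyhedron_eqc _ _)
    (isPolyhedron_inter (isPolyhedron_eqc _ _) (isPolyhedron_eqc _ _))

lemma poly_V1 : IsPolyhedron V1 := by
  have h : V1 = {x : Fin 3 → ℝ | pr 0 x = (0:ℝ)} ∩ ({x | pr 1 x = (0:ℝ)} ∩ {x | pr 2 x = 1}) := by
    ext x
    simp only [V1, Set.mem_singleton_iff, Set.mem_inter_iff, Set.mem_setOf_eq, pr_apply]
    constructor
    · rintro rfl; simp
    · rintro ⟨h1, h2, h3⟩; funext i; fin_cases i <;> simpa [p1]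
  rw [h]
  exact isPolyhedron_inter (isPolyhedron_eqc _ _)
    (isPolyhedron_inter (isPolyhedron_eqc _ _) (isPolyhedron_eqc _ _))

lemma ne_L1 : L1.Nonempty := ⟨0, by simp [L1]⟩
lemma ne_L2 : L2.Nonempty := ⟨p1, by simp [L2]⟩
lemma ne_L3 : L3.Nonempty := ⟨p1, by simp [L3]⟩
lemma ne_Rx : Rx.Nonempty := ⟨0, by simp [Rx]⟩
lemma ne_Ry : Ry.Nonempty := ⟨0, by simp [Ry]⟩
lemma ne_Ra : Ra.Nonempty := ⟨p1, by simp [Ra]⟩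
lemma ne_Rb : Rb.Nonempty := ⟨p1, by simp [Rb]⟩
lemma ne_Rd : Rd.Nonempty := ⟨p1, by simp [Rd]⟩
lemma ne_V0 : V0.Nonempty := ⟨0, rfl⟩
lemma ne_V1 : V1.Nonempty := ⟨p1, rfl⟩

lemma ht_L1 : ∀ x ∈ L1, x 2 = 0 := fun _ h => h.2.2
lemma ht_Rx : ∀ x ∈ Rx, x 2 = 0 := fun _ h => h.2.2
lemma ht_Ry : ∀ x ∈ Ry, x 2 = 0 := fun _ h => h.2.2
lemma ht_V0 : ∀ x ∈ V0, x 2 = 0 := by rintro x rfl; rfl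
lemma ht_L2 : ∀ x ∈ L2, x 2 = 1 := fun _ h => h.2.2
lemma ht_L3 : ∀ x ∈ L3, x 2 = 1 := fun _ h => h.2.2
lemma ht_Ra : ∀ x ∈ Ra, x 2 = 1 := fun _ h => h.2.2
lemma ht_Rb : ∀ x ∈ Rb, x 2 = 1 := fun _ h => h.2.2
lemma ht_Rd : ∀ x ∈ Rd, x 2 = 1 := fun _ h => h.2.2
lemma ht_V1 : ∀ x ∈ V1, x 2 = 1 := by rintro x rfl; rfl

end Concrete2
section Pairs
variable {E : Type*} [NormedAddCommGroup E] [NormedSpace ℝ E]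

lemma pair_of_subset {A B : Set E} (h : B ⊆ A) (hf : IsFaceOf B A) (hne : B.Nonempty) :
    (A ∩ B).Nonempty → IsFaceOf (A ∩ B) A ∧ IsFaceOf (A ∩ B) B := by
  rw [Set.inter_eq_right.mpr h]
  exact fun _ => ⟨hf, isFaceOf_self hne⟩

lemma pair_of_subset' {A B : Set E} (h : B ⊆ A) (hf : IsFaceOf B A) (hne : B.Nonempty) :
    (B ∩ A).Nonempty → IsFaceOf (B ∩ A) B ∧ IsFaceOf (B ∩ A) A := by
  rw [Set.inter_eq_left.mpr h]
  exact fun _ => ⟨isFaceOf_self hne, hf⟩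

lemma pair_of_eq {A B C : Set E} (h : A ∩ B = C) (h1 : IsFaceOf C A) (h2 : IsFaceOf C B) :
    (A ∩ B).Nonempty → IsFaceOf (A ∩ B) A ∧ IsFaceOf (A ∩ B) B := by
  rw [h]; exact fun _ => ⟨h1, h2⟩

lemma pair_of_eq' {A B C : Set E} (h : A ∩ B = C) (h1 : IsFaceOf C A) (h2 : IsFaceOf C B) :
    (B ∩ A).Nonempty → IsFaceOf (B ∩ A) B ∧ IsFaceOf (B ∩ A) A := by
  rw [Set.inter_comm B A, h]; exact fun _ => ⟨h2, h1⟩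

lemma pair_self {A : Set E} (h : A.Nonempty) :
    (A ∩ A).Nonempty → IsFaceOf (A ∩ A) A ∧ IsFaceOf (A ∩ A) A := by
  rw [Set.inter_self]; exact fun _ => ⟨isFaceOf_self h, isFaceOf_self h⟩

end Pairs

section Concrete3

lemma disj01 {A B : Set (Fin 3 → ℝ)} (hA : ∀ x ∈ A, x 2 = 0) (hB : ∀ x ∈ B, x 2 = 1)
    {C : Prop} : (A ∩ B).Nonempty → C :=
  fun ⟨x, hx⟩ => absurd ((hA x hx.1).symm.trans (hB x hx.2)) (by norm_num)

lemma disj10 {A B : Set (Fin 3 → ℝ)} (hA : ∀ x ∈ A, x 2 = 1) (hB : ∀ x ∈ B, x 2 = 0)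
    {C : Prop} : (A ∩ B).Nonempty → C :=
  fun ⟨x, hx⟩ => absurd ((hB x hx.2).symm.trans (hA x hx.1)) (by norm_num)

-- face facts
lemma face_Rx_L1 : IsFaceOf Rx L1 := (faces_L1 Rx).mpr (Or.inr (Or.inl rfl))
lemma face_Ry_L1 : IsFaceOf Ry L1 := (faces_L1 Ry).mpr (Or.inr (Or.inr (Or.inl rfl)))
lemma face_V0_L1 : IsFaceOf V0 L1 := (faces_L1 V0).mpr (Or.inr (Or.inr (Or.inr rfl)))
lemma face_V0_Rx : IsFaceOf V0 Rx := (faces_Rx V0).mpr (Or.inr rfl)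
lemma face_V0_Ry : IsFaceOf V0 Ry := (faces_Ry V0).mpr (Or.inr rfl)
lemma face_Ra_L2 : IsFaceOf Ra L2 := (faces_L2 Ra).mpr (Or.inr (Or.inl rfl))
lemma face_Rd_L2 : IsFaceOf Rd L2 := (faces_L2 Rd).mpr (Or.inr (Or.inr (Or.inl rfl)))
lemma face_V1_L2 : IsFaceOf V1 L2 := (faces_L2 V1).mpr (Or.inr (Or.inr (Or.inr rfl)))
lemma face_Rb_L3 : IsFaceOf Rb L3 := (faces_L3 Rb).mpr (Or.inr (Or.inl rfl))
lemma face_Rd_L3 : IsFaceOf Rd L3 := (faces_L3 Rd).mpr (Or.inr (Or.inr (Or.inl rfl)))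
lemma face_V1_L3 : IsFaceOf V1 L3 := (faces_L3 V1).mpr (Or.inr (Or.inr (Or.inr rfl)))
lemma face_V1_Ra : IsFaceOf V1 Ra := (faces_Ra V1).mpr (Or.inr rfl)
lemma face_V1_Rb : IsFaceOf V1 Rb := (faces_Rb V1).mpr (Or.inr rfl)
lemma face_V1_Rd : IsFaceOf V1 Rd := (faces_Rd V1).mpr (Or.inr rfl)

-- subsets
lemma sub_Rx_L1 : Rx ⊆ L1 := fun x h => ⟨h.1, le_of_eq h.2.1.symm, h.2.2⟩
lemma sub_Ry_L1 : Ry ⊆ L1 := fun x h => ⟨le_of_eq h.1.symm, h.2.1, h.2.2⟩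
lemma sub_V0_L1 : V0 ⊆ L1 := by rintro x rfl; exact ⟨le_refl 0, le_refl 0, rfl⟩
lemma sub_V0_Rx : V0 ⊆ Rx := by rintro x rfl; exact ⟨le_refl 0, rfl, rfl⟩
lemma sub_V0_Ry : V0 ⊆ Ry := by rintro x rfl; exact ⟨rfl, le_refl 0, rfl⟩
lemma sub_Ra_L2 : Ra ⊆ L2 := fun x h => ⟨le_of_eq h.2.1.symm, h.2.1 ▸ h.1, h.2.2⟩
lemma sub_Rd_L2 : Rd ⊆ L2 := fun x h => ⟨h.2.1 ▸ h.1, le_of_eq h.2.1.symm, h.2.2⟩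
lemma sub_Rb_L3 : Rb ⊆ L3 := fun x h => ⟨le_of_eq h.1.symm, h.1 ▸ h.2.1, h.2.2⟩
lemma sub_Rd_L3 : Rd ⊆ L3 := fun x h => ⟨h.1, le_of_eq h.2.1, h.2.2⟩
lemma sub_V1_L2 : V1 ⊆ L2 := by rintro x rfl; exact ⟨le_refl 0, le_refl 0, rfl⟩
lemma sub_V1_L3 : V1 ⊆ L3 := by rintro x rfl; exact ⟨le_refl 0, le_refl 0, rfl⟩
lemma sub_V1_Ra : V1 ⊆ Ra := by rintro x rfl; exact ⟨le_refl 0, rfl, rfl⟩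
lemma sub_V1_Rb : V1 ⊆ Rb := by rintro x rfl; exact ⟨rfl, le_refl 0, rfl⟩
lemma sub_V1_Rd : V1 ⊆ Rd := by rintro x rfl; exact ⟨le_refl 0, rfl, rfl⟩

-- intersection identities
lemma inter_Rx_Ry : Rx ∩ Ry = V0 := by
  ext x
  simp only [Rx, Ry, V0, Set.mem_inter_iff, Set.mem_setOf_eq, Set.mem_singleton_iff]
  constructor
  · rintro ⟨⟨-, h1, h2⟩, ⟨h0, -, -⟩⟩
    funext i; fin_cases i <;> simpa
  · rintro rfl; norm_num

lemma inter_L2_L3 : L2 ∩ L3 = Rd := by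
  ext x
  simp only [L2, L3, Rd, Set.mem_inter_iff, Set.mem_setOf_eq]
  constructor
  · rintro ⟨⟨h1, h2, h3⟩, ⟨h4, h5, -⟩⟩
    exact ⟨h4, le_antisymm h5 h2, h3⟩
  · rintro ⟨h1, h2, h3⟩
    exact ⟨⟨h2 ▸ h1, le_of_eq h2.symm, h3⟩, ⟨h1, le_of_eq h2, h3⟩⟩

lemma inter_L2_Rb : L2 ∩ Rb = V1 := by
  ext x
  simp only [L2, Rb, V1, Set.mem_inter_iff, Set.mem_setOf_eq, Set.mem_singleton_iff]
  constructor
  · rintro ⟨⟨h1, h2, h3⟩, ⟨h0, -, -⟩⟩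
    funext i; fin_cases i <;> simp [p1]
    · exact h0
    · exact le_antisymm (h0 ▸ h2) h1
    · exact h3
  · rintro rfl; norm_num

lemma inter_Ra_L3 : Ra ∩ L3 = V1 := by
  ext x
  simp only [Ra, L3, V1, Set.mem_inter_iff, Set.mem_setOf_eq, Set.mem_singleton_iff]
  constructor
  · rintro ⟨⟨h1, h2, h3⟩, ⟨-, h5, -⟩⟩
    funext i; fin_cases i <;> simp [p1]
    · exact le_antisymm (h2 ▸ h5) h1
    · exact h2
    · exact h3
  · rintro rfl; norm_num

lemma inter_Ra_Rd : Ra ∩ Rd = V1 := by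
  ext x
  simp only [Ra, Rd, V1, Set.mem_inter_iff, Set.mem_setOf_eq, Set.mem_singleton_iff]
  constructor
  · rintro ⟨⟨h1, h2, h3⟩, ⟨-, h5, -⟩⟩
    funext i; fin_cases i <;> simp [p1]
    · exact h5.trans h2
    · exact h2
    · exact h3
  · rintro rfl; norm_num

lemma inter_Ra_Rb : Ra ∩ Rb = V1 := by
  ext x
  simp only [Ra, Rb, V1, Set.mem_inter_iff, Set.mem_setOf_eq, Set.mem_singleton_iff]
  constructor
  · rintro ⟨⟨-, h2, h3⟩, ⟨h0, -, -⟩⟩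
    funext i; fin_cases i <;> simp [p1]
    · exact h0
    · exact h2
    · exact h3
  · rintro rfl; norm_num

lemma inter_Rd_Rb : Rd ∩ Rb = V1 := by
  ext x
  simp only [Rd, Rb, V1, Set.mem_inter_iff, Set.mem_setOf_eq, Set.mem_singleton_iff]
  constructor
  · rintro ⟨⟨-, h2, h3⟩, ⟨h0, -, -⟩⟩
    funext i; fin_cases i <;> simp [p1]
    · exact h0
    · exact h0 ▸ h2.symm
    · exact h3
  · rintro rfl; norm_num

end Concrete3
section Main

/-- The complex. -/
def Pc : Set (Set (Fin 3 → ℝ)) := {S | IsFaceOf S L1 ∨ IsFaceOf S L2 ∨ IsFaceOf S L3}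

lemma Pc_eq : Pc = {L1, Rx, Ry, V0, L2, Ra, Rd, L3, Rb, V1} := by
  ext S
  simp only [Pc, Set.mem_setOf_eq, faces_L1, faces_L2, faces_L3, Set.mem_insert_iff,
    Set.mem_singleton_iff]
  tauto

lemma mem_Pc {S : Set (Fin 3 → ℝ)}
    (h : S = L1 ∨ S = Rx ∨ S = Ry ∨ S = V0 ∨ S = L2 ∨ S = Ra ∨ S = Rd ∨ S = L3 ∨
      S = Rb ∨ S = V1) : S ∈ Pc := by
  rw [Pc_eq]
  simpa using h

lemma complex_Pc : IsPolyComplex Pc := by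
  refine ⟨⟨L1, mem_Pc (Or.inl rfl)⟩, ?_, ?_, ?_, ?_⟩
  · rw [Pc_eq]
    apply Set.Finite.insert; apply Set.Finite.insert; apply Set.Finite.insert
    apply Set.Finite.insert; apply Set.Finite.insert; apply Set.Finite.insert
    apply Set.Finite.insert; apply Set.Finite.insert; apply Set.Finite.insert
    exact Set.finite_singleton _
  · intro S hS
    rw [Pc_eq] at hS
    simp only [Set.mem_insert_iff, Set.mem_singleton_iff] at hS
    rcases hS with rfl | rfl | rfl | rfl | rfl | rfl | rfl | rfl | rfl | rfl
    · exact ⟨poly_L1, ne_L1⟩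
    · exact ⟨poly_Rx, ne_Rx⟩
    · exact ⟨poly_Ry, ne_Ry⟩
    · exact ⟨poly_V0, ne_V0⟩
    · exact ⟨poly_L2, ne_L2⟩
    · exact ⟨poly_Ra, ne_Ra⟩
    · exact ⟨poly_Rd, ne_Rd⟩
    · exact ⟨poly_L3, ne_L3⟩
    · exact ⟨poly_Rb, ne_Rb⟩
    · exact ⟨poly_V1, ne_V1⟩
  · intro S hS F hF
    rw [Pc_eq] at hS
    simp only [Set.mem_insert_iff, Set.mem_singleton_iff] at hS
    rcases hS with rfl | rfl | rfl | rfl | rfl | rfl | rfl | rfl | rfl | rfl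
    · rcases (faces_L1 F).mp hF with rfl | rfl | rfl | rfl <;> apply mem_Pc <;> tauto
    · rcases (faces_Rx F).mp hF with rfl | rfl <;> apply mem_Pc <;> tauto
    · rcases (faces_Ry F).mp hF with rfl | rfl <;> apply mem_Pc <;> tauto
    · rcases (faces_V0 F).mp hF with rfl <;> apply mem_Pc <;> tauto
    · rcases (faces_L2 F).mp hF with rfl | rfl | rfl | rfl <;> apply mem_Pc <;> tauto
    · rcases (faces_Ra F).mp hF with rfl | rfl <;> apply mem_Pc <;> tauto
    · rcases (faces_Rd F).mp hF with rfl | rfl <;> apply mem_Pc <;> tauto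
    · rcases (faces_L3 F).mp hF with rfl | rfl | rfl | rfl <;> apply mem_Pc <;> tauto
    · rcases (faces_Rb F).mp hF with rfl | rfl <;> apply mem_Pc <;> tauto
    · rcases (faces_V1 F).mp hF with rfl <;> apply mem_Pc <;> tauto
  · intro S hS T hT
    rw [Pc_eq] at hS hT
    simp only [Set.mem_insert_iff, Set.mem_singleton_iff] at hS hT
    rcases hS with rfl | rfl | rfl | rfl | rfl | rfl | rfl | rfl | rfl | rfl <;>
      rcases hT with rfl | rfl | rfl | rfl | rfl | rfl | rfl | rfl | rfl | rfl
    · exact pair_self ne_L1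
    · exact pair_of_subset sub_Rx_L1 face_Rx_L1 ne_Rx
    · exact pair_of_subset sub_Ry_L1 face_Ry_L1 ne_Ry
    · exact pair_of_subset sub_V0_L1 face_V0_L1 ne_V0
    · exact disj01 ht_L1 ht_L2
    · exact disj01 ht_L1 ht_Ra
    · exact disj01 ht_L1 ht_Rd
    · exact disj01 ht_L1 ht_L3
    · exact disj01 ht_L1 ht_Rb
    · exact disj01 ht_L1 ht_V1
    · exact pair_of_subset' sub_Rx_L1 face_Rx_L1 ne_Rx
    · exact pair_self ne_Rx
    · exact pair_of_eq inter_Rx_Ry face_V0_Rx face_V0_Ry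
    · exact pair_of_subset sub_V0_Rx face_V0_Rx ne_V0
    · exact disj01 ht_Rx ht_L2
    · exact disj01 ht_Rx ht_Ra
    · exact disj01 ht_Rx ht_Rd
    · exact disj01 ht_Rx ht_L3
    · exact disj01 ht_Rx ht_Rb
    · exact disj01 ht_Rx ht_V1
    · exact pair_of_subset' sub_Ry_L1 face_Ry_L1 ne_Ry
    · exact pair_of_eq' inter_Rx_Ry face_V0_Rx face_V0_Ry
    · exact pair_self ne_Ry
    · exact pair_of_subset sub_V0_Ry face_V0_Ry ne_V0
    · exact disj01 ht_Ry ht_L2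
    · exact disj01 ht_Ry ht_Ra
    · exact disj01 ht_Ry ht_Rd
    · exact disj01 ht_Ry ht_L3
    · exact disj01 ht_Ry ht_Rb
    · exact disj01 ht_Ry ht_V1
    · exact pair_of_subset' sub_V0_L1 face_V0_L1 ne_V0
    · exact pair_of_subset' sub_V0_Rx face_V0_Rx ne_V0
    · exact pair_of_subset' sub_V0_Ry face_V0_Ry ne_V0
    · exact pair_self ne_V0
    · exact disj01 ht_V0 ht_L2
    · exact disj01 ht_V0 ht_Ra
    · exact disj01 ht_V0 ht_Rd
    · exact disj01 ht_V0 ht_L3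
    · exact disj01 ht_V0 ht_Rb
    · exact disj01 ht_V0 ht_V1
    · exact disj10 ht_L2 ht_L1
    · exact disj10 ht_L2 ht_Rx
    · exact disj10 ht_L2 ht_Ry
    · exact disj10 ht_L2 ht_V0
    · exact pair_self ne_L2
    · exact pair_of_subset sub_Ra_L2 face_Ra_L2 ne_Ra
    · exact pair_of_subset sub_Rd_L2 face_Rd_L2 ne_Rd
    · exact pair_of_eq inter_L2_L3 face_Rd_L2 face_Rd_L3
    · exact pair_of_eq inter_L2_Rb face_V1_L2 face_V1_Rb
    · exact pair_of_subset sub_V1_L2 face_V1_L2 ne_V1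
    · exact disj10 ht_Ra ht_L1
    · exact disj10 ht_Ra ht_Rx
    · exact disj10 ht_Ra ht_Ry
    · exact disj10 ht_Ra ht_V0
    · exact pair_of_subset' sub_Ra_L2 face_Ra_L2 ne_Ra
    · exact pair_self ne_Ra
    · exact pair_of_eq inter_Ra_Rd face_V1_Ra face_V1_Rd
    · exact pair_of_eq inter_Ra_L3 face_V1_Ra face_V1_L3
    · exact pair_of_eq inter_Ra_Rb face_V1_Ra face_V1_Rb
    · exact pair_of_subset sub_V1_Ra face_V1_Ra ne_V1
    · exact disj10 ht_Rd ht_L1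
    · exact disj10 ht_Rd ht_Rx
    · exact disj10 ht_Rd ht_Ry
    · exact disj10 ht_Rd ht_V0
    · exact pair_of_subset' sub_Rd_L2 face_Rd_L2 ne_Rd
    · exact pair_of_eq' inter_Ra_Rd face_V1_Ra face_V1_Rd
    · exact pair_self ne_Rd
    · exact pair_of_subset' sub_Rd_L3 face_Rd_L3 ne_Rd
    · exact pair_of_eq inter_Rd_Rb face_V1_Rd face_V1_Rb
    · exact pair_of_subset sub_V1_Rd face_V1_Rd ne_V1
    · exact disj10 ht_L3 ht_L1
    · exact disj10 ht_L3 ht_Rx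
    · exact disj10 ht_L3 ht_Ry
    · exact disj10 ht_L3 ht_V0
    · exact pair_of_eq' inter_L2_L3 face_Rd_L2 face_Rd_L3
    · exact pair_of_eq' inter_Ra_L3 face_V1_Ra face_V1_L3
    · exact pair_of_subset sub_Rd_L3 face_Rd_L3 ne_Rd
    · exact pair_self ne_L3
    · exact pair_of_subset sub_Rb_L3 face_Rb_L3 ne_Rb
    · exact pair_of_subset sub_V1_L3 face_V1_L3 ne_V1
    · exact disj10 ht_Rb ht_L1
    · exact disj10 ht_Rb ht_Rx
    · exact disj10 ht_Rb ht_Ry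
    · exact disj10 ht_Rb ht_V0
    · exact pair_of_eq' inter_L2_Rb face_V1_L2 face_V1_Rb
    · exact pair_of_eq' inter_Ra_Rb face_V1_Ra face_V1_Rb
    · exact pair_of_eq' inter_Rd_Rb face_V1_Rd face_V1_Rb
    · exact pair_of_subset' sub_Rb_L3 face_Rb_L3 ne_Rb
    · exact pair_self ne_Rb
    · exact pair_of_subset sub_V1_Rb face_V1_Rb ne_V1
    · exact disj10 ht_V1 ht_L1
    · exact disj10 ht_V1 ht_Rx
    · exact disj10 ht_V1 ht_Ry
    · exact disj10 ht_V1 ht_V0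
    · exact pair_of_subset' sub_V1_L2 face_V1_L2 ne_V1
    · exact pair_of_subset' sub_V1_Ra face_V1_Ra ne_V1
    · exact pair_of_subset' sub_V1_Rd face_V1_Rd ne_V1
    · exact pair_of_subset' sub_V1_L3 face_V1_L3 ne_V1
    · exact pair_of_subset' sub_V1_Rb face_V1_Rb ne_V1
    · exact pair_self ne_V1

end Main
section Support

def Usup : Set (Fin 3 → ℝ) := {x | 0 ≤ x 0 ∧ 0 ≤ x 1 ∧ (x 2 = 0 ∨ x 2 = 1)}

lemma supp_eq : polySupport Pc = Usup := by
  apply subset_antisymm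
  · intro x hx
    simp only [polySupport, Set.mem_iUnion] at hx
    obtain ⟨S, hS, hxS⟩ := hx
    rw [Pc_eq] at hS
    simp only [Set.mem_insert_iff, Set.mem_singleton_iff] at hS
    rcases hS with rfl | rfl | rfl | rfl | rfl | rfl | rfl | rfl | rfl | rfl
    · exact ⟨hxS.1, hxS.2.1, Or.inl hxS.2.2⟩
    · exact ⟨hxS.1, le_of_eq hxS.2.1.symm, Or.inl hxS.2.2⟩
    · exact ⟨le_of_eq hxS.1.symm, hxS.2.1, Or.inl hxS.2.2⟩
    · rw [V0] at hxS; subst hxS; exact ⟨le_refl 0, le_refl 0, Or.inl rfl⟩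
    · exact ⟨le_trans hxS.1 hxS.2.1, hxS.1, Or.inr hxS.2.2⟩
    · exact ⟨hxS.1, le_of_eq hxS.2.1.symm, Or.inr hxS.2.2⟩
    · exact ⟨hxS.1, hxS.2.1 ▸ hxS.1, Or.inr hxS.2.2⟩
    · exact ⟨hxS.1, le_trans hxS.1 hxS.2.1, Or.inr hxS.2.2⟩
    · exact ⟨le_of_eq hxS.1.symm, hxS.2.1, Or.inr hxS.2.2⟩
    · rw [V1] at hxS; subst hxS; exact ⟨le_refl 0, le_refl 0, Or.inr rfl⟩
  · rintro x ⟨h0, h1, h2 | h2⟩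
    · exact Set.mem_biUnion (mem_Pc (Or.inl rfl)) ⟨h0, h1, h2⟩
    · rcases le_total (x 1) (x 0) with h | h
      · exact Set.mem_biUnion (mem_Pc (S := L2) (by tauto)) ⟨h1, h, h2⟩
      · exact Set.mem_biUnion (mem_Pc (S := L3) (by tauto)) ⟨h0, h, h2⟩

lemma locRec_Usup (p : Fin 3 → ℝ) (hp : p ∈ Usup) : locRec Usup p = L1 := by
  obtain ⟨hp0, hp1, hp2⟩ := hp
  ext u
  constructor
  · intro hu
    have key : ∀ t : ℝ, 0 ≤ t →
        0 ≤ p 0 + t * u 0 ∧ 0 ≤ p 1 + t * u 1 ∧ (p 2 + t * u 2 = 0 ∨ p 2 + t * u 2 = 1) := by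
      intro t ht
      have := hu t ht
      simpa [Usup, Pi.add_apply, Pi.smul_apply, smul_eq_mul] using this
    have h0 : 0 ≤ u 0 := by
      by_contra hc
      push_neg at hc
      have h := (key ((p 0 + 1) / (-u 0)) (le_of_lt (div_pos (by linarith) (by linarith)))).1
      rw [div_mul_eq_mul_div, mul_comm] at h
      have he : u 0 * (p 0 + 1) / (-u 0) = -(p 0 + 1) := by
        rw [div_eq_iff (by linarith : (-u 0) ≠ 0)]; ring
      rw [he] at h
      linarith
    have h1 : 0 ≤ u 1 := by
      by_contra hc
      push_neg at hc
      have h := (key ((p 1 + 1) / (-u 1)) (le_of_lt (div_pos (by linarith) (by linarith)))).2.1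
      rw [div_mul_eq_mul_div, mul_comm] at h
      have he : u 1 * (p 1 + 1) / (-u 1) = -(p 1 + 1) := by
        rw [div_eq_iff (by linarith : (-u 1) ≠ 0)]; ring
      rw [he] at h
      linarith
    have h2 : u 2 = 0 := by
      have k1 := (key 1 (by norm_num)).2.2
      have k2 := (key 2 (by norm_num)).2.2
      rcases hp2 with h | h <;> rcases k1 with k | k <;> rcases k2 with k' | k' <;> linarith
    exact ⟨h0, h1, h2⟩
  · rintro ⟨h0, h1, h2⟩ t ht
    refine ⟨?_, ?_, ?_⟩
    · have : (0:ℝ) ≤ p 0 + t * u 0 := by positivity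
      simpa [Pi.add_apply, Pi.smul_apply, smul_eq_mul] using this
    · have : (0:ℝ) ≤ p 1 + t * u 1 := by positivity
      simpa [Pi.add_apply, Pi.smul_apply, smul_eq_mul] using this
    · have : (p + t • u) 2 = p 2 := by
        simp [Pi.add_apply, Pi.smul_apply, smul_eq_mul, h2]
      rw [this]
      exact hp2

lemma zero_mem_Usup : (0 : Fin 3 → ℝ) ∈ Usup := ⟨le_refl 0, le_refl 0, Or.inl rfl⟩

lemma recSet_Usup : recSet Usup = L1 := by
  apply subset_antisymm
  · intro u hu
    have h := Set.mem_iInter₂.mp hu 0 zero_mem_Usup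
    rw [locRec_Usup 0 zero_mem_Usup] at h
    exact h
  · intro u hu
    apply Set.mem_iInter₂.mpr
    intro p hp
    rw [locRec_Usup p hp]
    exact hu

lemma mw_Usup : MWCondition Usup := by
  intro p hp
  rw [locRec_Usup p hp, recSet_Usup]

lemma not_connected_Usup : ¬ IsConnected Usup := by
  rintro ⟨-, hpc⟩
  have hU : IsOpen {x : Fin 3 → ℝ | x 2 < 1/2} := isOpen_lt (continuous_apply 2) continuous_const
  have hV : IsOpen {x : Fin 3 → ℝ | 1/2 < x 2} := isOpen_lt continuous_const (continuous_apply 2)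
  have h := hpc {x | x 2 < 1/2} {x | 1/2 < x 2} hU hV
    (by
      rintro x ⟨-, -, h | h⟩
      · left; simpa [h] using by norm_num
      · right; simpa [h] using by norm_num)
    ⟨0, zero_mem_Usup, by norm_num⟩
    ⟨p1, ⟨le_refl 0, le_refl 0, Or.inr rfl⟩, by norm_num⟩
  obtain ⟨x, -, h1, h2⟩ := h
  simp only [Set.mem_setOf_eq] at h1 h2
  linarith

end Support

section Rec

def C2 : Set (Fin 3 → ℝ) := {u | 0 ≤ u 1 ∧ u 1 ≤ u 0 ∧ u 2 = 0}

lemma recPoly_L1 : recPoly L1 = L1 := by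
  ext u
  constructor
  · intro hu
    have := hu 0 (by exact ⟨le_refl 0, le_refl 0, rfl⟩)
    simpa using this
  · rintro ⟨h0, h1, h2⟩ x ⟨hx0, hx1, hx2⟩
    refine ⟨by simpa using add_nonneg hx0 h0, by simpa using add_nonneg hx1 h1, ?_⟩
    simp [Pi.add_apply, hx2, h2]

lemma recPoly_L2 : recPoly L2 = C2 := by
  ext u
  constructor
  · intro hu
    have h := hu p1 ⟨le_refl 0, le_refl 0, rfl⟩
    obtain ⟨h1, h2, h3⟩ := h
    refine ⟨by simpa using h1, by simpa using h2, ?_⟩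
    have : p1 2 + u 2 = 1 := by simpa using h3
    simp only [p1_2] at this
    linarith
  · rintro ⟨h0, h1, h2⟩ x ⟨hx0, hx1, hx2⟩
    refine ⟨by simpa using add_nonneg hx0 h0, ?_, ?_⟩
    · have : x 1 + u 1 ≤ x 0 + u 0 := add_le_add hx1 h1
      simpa using this
    · simp [Pi.add_apply, hx2, h2]

lemma sub_C2_L1 : C2 ⊆ L1 := fun u ⟨h0, h1, h2⟩ => ⟨le_trans h0 h1, h0, h2⟩

lemma v100_mem_C2 : (![1,0,0] : Fin 3 → ℝ) ∈ C2 := by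
  refine ⟨le_refl 0, ?_, rfl⟩
  norm_num

lemma v110_mem_C2 : (![1,1,0] : Fin 3 → ℝ) ∈ C2 := by
  refine ⟨?_, le_refl 1, rfl⟩
  norm_num

lemma not_complex_rec : ¬ IsPolyComplex (recComplex Pc) := by
  rintro ⟨-, -, -, -, hpair⟩
  have h1 : L1 ∈ recComplex Pc := ⟨L1, mem_Pc (Or.inl rfl), recPoly_L1.symm⟩
  have h2 : C2 ∈ recComplex Pc := ⟨L2, mem_Pc (by tauto), recPoly_L2.symm⟩
  have hne : (L1 ∩ C2).Nonempty := ⟨0, ⟨le_refl 0, le_refl 0, rfl⟩, ⟨le_refl 0, le_refl 0, rfl⟩⟩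
  obtain ⟨hf, -⟩ := hpair L1 h1 C2 h2 hne
  rw [Set.inter_eq_right.mpr sub_C2_L1] at hf
  obtain ⟨-, x, hx⟩ := hf
  have hm1 : (![1,0,0] : Fin 3 → ℝ) ∈ faceSet L1 x := hx ▸ v100_mem_C2
  have hm2 : (![1,1,0] : Fin 3 → ℝ) ∈ faceSet L1 x := hx ▸ v110_mem_C2
  obtain ⟨hmem1, hmin1⟩ := hm1
  obtain ⟨hmem2, hmin2⟩ := hm2
  set a := x ![1,0,0] with ha
  set b := x ![1,1,0] with hb
  have ha0 : a ≤ 0 := by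
    have := hmin1 0 ⟨le_refl 0, le_refl 0, rfl⟩
    simpa using this
  have hab : a ≤ b := hmin1 _ hmem2
  have hba : b ≤ a := hmin2 _ hmem1
  have h2a : a ≤ 2 * a := by
    have hmem : (![2,0,0] : Fin 3 → ℝ) ∈ L1 := ⟨by norm_num, le_refl 0, rfl⟩
    have h := hmin1 _ hmem
    have he : (![2,0,0] : Fin 3 → ℝ) = (2:ℝ) • ![1,0,0] := by
      funext i; fin_cases i <;> norm_num
    rw [he, map_smul, smul_eq_mul] at h
    exact h
  have haz : a = 0 := le_antisymm ha0 (by linarith)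
  have hsum : (![1,1,0] : Fin 3 → ℝ) = ![1,0,0] + ![0,1,0] := by
    funext i; fin_cases i <;> norm_num
  have hw : x ![0,1,0] = 0 := by
    have : b = a + x ![0,1,0] := by rw [hb, hsum, map_add]
    have hbz : b = 0 := le_antisymm (hba.trans (le_of_eq haz)) ((le_of_eq haz.symm).trans hab)
    rw [hbz, haz] at this
    linarith
  have hwmem : (![0,1,0] : Fin 3 → ℝ) ∈ faceSet L1 x := by
    refine ⟨⟨le_refl 0, by norm_num, rfl⟩, ?_⟩
    intro v hv
    rw [hw, ← haz]
    exact hmin1 v hv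
  rw [← hx] at hwmem
  have := hwmem.2.1
  norm_num at this

end Rec
/-- Example 1(1): the polyhedral complex `Π` in `ℝ³`
consisting of all faces of `{(x₁,x₂,0) | x₁,x₂ ≥ 0}`,
`{(x₁,x₂,1) | x₁ ≥ x₂ ≥ 0}` and `{(x₁,x₂,1) | x₂ ≥ x₁ ≥ 0}` has support
satisfying the Minkowski-Weyl condition but not connected, and `rec(Π)` is not
a polyhedral complex. -/
theorem statement15 :
    let Λ₁ : Set (Fin 3 → ℝ) := {x | 0 ≤ x 0 ∧ 0 ≤ x 1 ∧ x 2 = 0}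
    let Λ₂ : Set (Fin 3 → ℝ) := {x | 0 ≤ x 1 ∧ x 1 ≤ x 0 ∧ x 2 = 1}
    let Λ₃ : Set (Fin 3 → ℝ) := {x | 0 ≤ x 0 ∧ x 0 ≤ x 1 ∧ x 2 = 1}
    let P : Set (Set (Fin 3 → ℝ)) :=
      {S | IsFaceOf S Λ₁ ∨ IsFaceOf S Λ₂ ∨ IsFaceOf S Λ₃}
    IsPolyComplex P ∧
    MWCondition (polySupport P) ∧
    ¬ IsConnected (polySupport P) ∧
    ¬ IsPolyComplex (recComplex P) := by
  intro Λ₁ Λ₂ Λ₃ P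
  show IsPolyComplex Pc ∧ MWCondition (polySupport Pc) ∧
    ¬ IsConnected (polySupport Pc) ∧ ¬ IsPolyComplex (recComplex Pc)
  refine ⟨complex_Pc, ?_, ?_, not_complex_rec⟩
  · rw [supp_eq]; exact mw_Usup
  · rw [supp_eq]; exact not_connected_Usup
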